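/- arXiv:1012.2793 — 3 statements merged into one kernel-verified Lean document; each statement's English description precedes it below -/
import Mathlib

section
/- Let L be the subgroup of SL₂(ℤ) generated by the four matrices [[1,3],[0,1]], [[1,−3],[0,1]], [[1,0],[3,1]], [[1,0],[−3,1]]. Then for every prime p ≠ 3, the reduction map L → SL₂(ℤ/pℤ) is surjective. -/
/-!
Over the field `ZMod p`, `SL₂` is generated by the elementary transvections `[[1,c],[0,1]]` and
`[[1,0],[c,1]]`. The reductions of `[[1,3],[0,1]]` and `[[1,0],[3,1]]` are the transvections with
parameter `3`, which is invertible mod `p` when `p ≠ 3`; so their powers already give every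
transvection, and the image of `L` is everything.
-/

/-- The matrix `[[1,3],[0,1]]` as an element of `SL₂(ℤ)`. -/
def lubGen₁ : Matrix.SpecialLinearGroup (Fin 2) ℤ :=
  ⟨!![1, 3; 0, 1], by norm_num [Matrix.det_fin_two_of]⟩

/-- The matrix `[[1,-3],[0,1]]` as an element of `SL₂(ℤ)`. -/
def lubGen₂ : Matrix.SpecialLinearGroup (Fin 2) ℤ :=
  ⟨!![1, -3; 0, 1], by norm_num [Matrix.det_fin_two_of]⟩

/-- The matrix `[[1,0],[3,1]]` as an element of `SL₂(ℤ)`. -/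
def lubGen₃ : Matrix.SpecialLinearGroup (Fin 2) ℤ :=
  ⟨!![1, 0; 3, 1], by norm_num [Matrix.det_fin_two_of]⟩

/-- The matrix `[[1,0],[-3,1]]` as an element of `SL₂(ℤ)`. -/
def lubGen₄ : Matrix.SpecialLinearGroup (Fin 2) ℤ :=
  ⟨!![1, 0; -3, 1], by norm_num [Matrix.det_fin_two_of]⟩

/-- The "Lubotzky group" `L ⊆ SL₂(ℤ)` generated by the four matrices
`[[1,±3],[0,1]]` and `[[1,0],[±3,1]]`. -/
def lubotzkyGroup : Subgroup (Matrix.SpecialLinearGroup (Fin 2) ℤ) :=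
  Subgroup.closure {lubGen₁, lubGen₂, lubGen₃, lubGen₄}

open MatrixGroups Matrix.SpecialLinearGroup

section transvection

variable {ι : Type*} [Fintype ι] [DecidableEq ι]

lemma Matrix.SpecialLinearGroup.map_transvection {R S : Type*} [CommRing R] [CommRing S]
    (f : R →+* S) {i j : ι} (hij : i ≠ j) (b : R) :
    map f (transvection hij b) = transvection hij (f b) := by
  ext k l
  simp [transvection_coe, Matrix.one_apply, Matrix.single_apply, apply_ite f]

lemma Matrix.SpecialLinearGroup.transvection_nsmul {R : Type*} [CommRing R] {i j : ι}
    (hij : i ≠ j) (n : ℕ) (b : R) :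
    transvection hij (n • b) = transvection hij b ^ n := by
  induction n with
  | zero => simp
  | succ n ih => rw [succ_nsmul, transvection_add, ih, pow_succ]

lemma Matrix.SpecialLinearGroup.transvection_mem_of_ne_zero {p : ℕ} [Fact p.Prime]
    {H : Subgroup (SpecialLinearGroup ι (ZMod p))} {i j : ι} (hij : i ≠ j) {b : ZMod p}
    (hb : b ≠ 0) (hH : transvection hij b ∈ H) (c : ZMod p) : transvection hij c ∈ H := by
  have hc : c = (c / b).val • b := by
    rw [nsmul_eq_mul, ZMod.natCast_zmod_val, div_mul_cancel₀ c hb]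
  rw [hc, transvection_nsmul]
  exact H.pow_mem hH _

end transvection

lemma Matrix.SL2.eq_top_of_transvection_mem {F : Type*} [Field F] {H : Subgroup SL(2, F)}
    (hH : ∀ (i j : Fin 2) (hij : i ≠ j) (c : F), SpecialLinearGroup.transvection hij c ∈ H) :
    H = ⊤ :=
  eq_top_iff.2 fun A _ ↦ SL2.transvection_induction (· ∈ H) hH (fun _ _ ↦ H.mul_mem) A

lemma lubGen₁_eq_transvection : lubGen₁ = transvection zero_ne_one 3 := by
  ext i j; fin_cases i <;> fin_cases j <;> rfl

lemma lubGen₃_eq_transvection : lubGen₃ = transvection one_ne_zero 3 := by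
  ext i j; fin_cases i <;> fin_cases j <;> rfl

lemma ZMod.three_ne_zero {p : ℕ} (hp : p.Prime) (hp3 : p ≠ 3) : (3 : ZMod p) ≠ 0 := by
  rw [← Nat.cast_ofNat, ne_eq, ZMod.natCast_eq_zero_iff]
  exact fun h ↦ hp3 ((Nat.prime_dvd_prime_iff_eq hp Nat.prime_three).1 h)

theorem stmt3 (p : ℕ) (hp : p.Prime) (hp3 : p ≠ 3) :
    Function.Surjective
      (fun γ : lubotzkyGroup =>
        Matrix.SpecialLinearGroup.map (Int.castRingHom (ZMod p))
          (γ : Matrix.SpecialLinearGroup (Fin 2) ℤ)) := by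
  have : Fact p.Prime := ⟨hp⟩
  set H := lubotzkyGroup.map (map (Int.castRingHom (ZMod p)))
  have image_mem (γ) (hγ : γ ∈ ({lubGen₁, lubGen₂, lubGen₃, lubGen₄} : Set _)) :
      map (Int.castRingHom (ZMod p)) γ ∈ H :=
    Subgroup.mem_map_of_mem _ (Subgroup.subset_closure hγ)
  have hH : H = ⊤ := by
    refine Matrix.SL2.eq_top_of_transvection_mem fun i j hij c ↦ ?_
    refine transvection_mem_of_ne_zero hij (ZMod.three_ne_zero hp hp3) ?_ c
    fin_cases i <;> fin_cases j
    · exact absurd rfl hij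
    · simpa [lubGen₁_eq_transvection, map_transvection] using image_mem lubGen₁ (by simp)
    · simpa [lubGen₃_eq_transvection, map_transvection] using image_mem lubGen₃ (by simp)
    · exact absurd rfl hij
  intro M
  obtain ⟨γ, hγ, rfl⟩ : M ∈ H := hH ▸ Subgroup.mem_top M
  exact ⟨⟨γ, hγ⟩, rfl⟩
end

section
/- Let L be the subgroup of SL₂(ℤ) generated by the four matrices [[1,3],[0,1]], [[1,−3],[0,1]], [[1,0],[3,1]], [[1,0],[−3,1]]. Then for every squarefree positive integer d not divisible by 3, the reduction map L → SL₂(ℤ/dℤ) is surjective; equivalently, the simultaneous reduction map L → ∏_{p | d} SL₂(ℤ/pℤ) over the primes p dividing d is surjective. -/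
theorem ZMod.exists_isUnit_add_mul_of_isCoprime {n : ℕ} [NeZero n] {a c : ZMod n}
    (h : IsCoprime a c) : ∃ t, IsUnit (a + t * c) := by
  set g := c.val.gcd n
  have hg : g ∣ n := Nat.gcd_dvd_right _ _
  have hc : castHom hg (ZMod g) c = 0 := by
    rw [castHom_apply, cast_eq_val, natCast_eq_zero_iff]
    exact Nat.gcd_dvd_left _ _
  have hgc : (g : ZMod n) = c * (c.val.gcdA n : ZMod n) := by
    have := congrArg (Int.cast : ℤ → ZMod n) (Nat.gcd_eq_gcd_ab c.val n)
    push_cast at this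
    simpa [natCast_self] using this
  have ha : IsUnit (castHom hg (ZMod g) a) := by
    obtain ⟨x, y, hxy⟩ := h
    refine .of_mul_eq_one (castHom hg (ZMod g) x) ?_
    have := congrArg (castHom hg (ZMod g)) hxy
    rwa [map_add, map_mul, map_mul, hc, mul_zero, add_zero, map_one, mul_comm] at this
  obtain ⟨u, hu⟩ := unitsMap_surjective hg ha.unit
  obtain ⟨k, hk⟩ : g ∣ ((u : ZMod n) - a).val := by
    rw [← natCast_eq_zero_iff, ← cast_eq_val, ← castHom_apply (h := hg), map_sub, sub_eq_zero]
    exact congrArg Units.val hu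
  refine ⟨k * (c.val.gcdA n : ZMod n), ?_⟩
  convert u.isUnit
  have := congrArg (Nat.cast : ℕ → ZMod n) hk
  rw [natCast_zmod_val, Nat.cast_mul, hgc] at this
  linear_combination -this

theorem AddChar.mem_zpowers_of_isUnit {n : ℕ} {G : Type*} [Group G] (ψ : AddChar (ZMod n) G)
    {r : ZMod n} (hr : IsUnit r) (x : ZMod n) : ψ x ∈ Subgroup.zpowers (ψ r) := by
  obtain ⟨k, hk⟩ := ZMod.intCast_surjective (x * ((hr.unit⁻¹ : (ZMod n)ˣ) : ZMod n))
  refine ⟨k, show ψ r ^ k = ψ x from ?_⟩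
  rw [← AddChar.map_zsmul_eq_zpow, zsmul_eq_mul, hk, mul_assoc, hr.val_inv_mul, mul_one]

namespace Matrix.SpecialLinearGroup

open scoped MatrixGroups

variable {R : Type*} [CommRing R]

def upperRightHom : AddChar R SL(2, R) where
  toFun x := ⟨!![1, x; 0, 1], by simp⟩
  map_zero_eq_one' := Subtype.ext one_fin_two.symm
  map_add_eq_mul' x y :=
    Subtype.ext (by simp [add_comm] : !![1, x + y; 0, 1] = !![1, x; 0, 1] * !![1, y; 0, 1])

def lowerLeftHom : AddChar R SL(2, R) where
  toFun x := ⟨!![1, 0; x, 1], by simp⟩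
  map_zero_eq_one' := Subtype.ext one_fin_two.symm
  map_add_eq_mul' x y :=
    Subtype.ext (by simp : !![1, 0; x + y, 1] = !![1, 0; x, 1] * !![1, 0; y, 1])

@[simp]
lemma coe_upperRightHom (x : R) : (upperRightHom x : Matrix (Fin 2) (Fin 2) R) = !![1, x; 0, 1] :=
  rfl

@[simp]
lemma coe_lowerLeftHom (x : R) : (lowerLeftHom x : Matrix (Fin 2) (Fin 2) R) = !![1, 0; x, 1] :=
  rfl

variable (R) in
def elementarySubgroup : Subgroup SL(2, R) :=
  Subgroup.closure (Set.range upperRightHom ∪ Set.range lowerLeftHom)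

lemma upperRightHom_mem_elementarySubgroup (x : R) : upperRightHom x ∈ elementarySubgroup R :=
  Subgroup.subset_closure (.inl ⟨x, rfl⟩)

lemma lowerLeftHom_mem_elementarySubgroup (x : R) : lowerLeftHom x ∈ elementarySubgroup R :=
  Subgroup.subset_closure (.inr ⟨x, rfl⟩)

lemma mem_elementarySubgroup_of_apply_one_zero_eq_zero {g : SL(2, R)} (hg : g 1 0 = 0) :
    g ∈ elementarySubgroup R := by
  have hdet : g 0 0 * g 1 1 = 1 := by
    simpa [hg] using (det_fin_two (g : Matrix (Fin 2) (Fin 2) R)).symm.trans g.det_coe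
  -- for `g = [[a, b], [0, d]]`: `g = diag(a, d) E₁₂(d b)` and `diag(a, d) = E₁₂(a) E₂₁(-d) E₁₂(a) w` for
  -- `w = E₁₂(-1) E₂₁(1) E₁₂(-1) = [[0,-1],[1,0]]`
  have : g = upperRightHom (g 0 0) * lowerLeftHom (-g 1 1) * upperRightHom (g 0 0) *
      (upperRightHom (-1) * lowerLeftHom 1 * upperRightHom (-1)) *
      upperRightHom (g 1 1 * g 0 1) := by
    ext i j
    fin_cases i <;> fin_cases j <;> simp [coe_mul, mul_apply, Fin.sum_univ_two, hg] <;> grind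
  rw [this]
  apply_rules [mul_mem, upperRightHom_mem_elementarySubgroup, lowerLeftHom_mem_elementarySubgroup]

theorem elementarySubgroup_eq_top
    (h : ∀ a c : R, IsCoprime a c → ∃ t, IsUnit (a + t * c)) : elementarySubgroup R = ⊤ := by
  refine (Subgroup.eq_top_iff' _).mpr fun g ↦ ?_
  obtain ⟨t, u, hu⟩ := h _ _ (isCoprime_col g 0)
  set s := -(g 1 0 * ↑u⁻¹)
  have hlow : (lowerLeftHom s * (upperRightHom t * g)) 1 0 = 0 := by
    simp only [s, coe_mul, coe_lowerLeftHom, coe_upperRightHom, mul_apply, Fin.sum_univ_two, of_apply,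
      cons_val', cons_val_fin_one, cons_val_zero, cons_val_one]
    linear_combination (g 1 0 * ↑u⁻¹) * hu - g 1 0 * u.inv_mul
  have := mem_elementarySubgroup_of_apply_one_zero_eq_zero hlow
  rwa [Subgroup.mul_mem_cancel_left _ (lowerLeftHom_mem_elementarySubgroup s),
    Subgroup.mul_mem_cancel_left _ (upperRightHom_mem_elementarySubgroup t)] at this

lemma map_lubGen₁ : map (Int.castRingHom R) lubGen₁ = upperRightHom 3 := by
  ext i j
  rw [map_apply_coe]
  fin_cases i <;> fin_cases j <;> simp [lubGen₁]

lemma map_lubGen₃ : map (Int.castRingHom R) lubGen₃ = lowerLeftHom 3 := by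
  ext i j
  rw [map_apply_coe]
  fin_cases i <;> fin_cases j <;> simp [lubGen₃]

lemma elementarySubgroup_le_map_lubotzkyGroup {n : ℕ} (h3 : IsUnit (3 : ZMod n)) :
    elementarySubgroup (ZMod n) ≤ lubotzkyGroup.map (map (Int.castRingHom (ZMod n))) := by
  have hgen₁ : upperRightHom 3 ∈ lubotzkyGroup.map (map (Int.castRingHom (ZMod n))) :=
    ⟨lubGen₁, Subgroup.subset_closure (by simp), map_lubGen₁⟩
  have hgen₃ : lowerLeftHom 3 ∈ lubotzkyGroup.map (map (Int.castRingHom (ZMod n))) :=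
    ⟨lubGen₃, Subgroup.subset_closure (by simp), map_lubGen₃⟩
  refine (Subgroup.closure_le _).mpr (Set.union_subset ?_ ?_) <;> rintro _ ⟨x, rfl⟩
  · exact Subgroup.zpowers_le.mpr hgen₁ (upperRightHom.mem_zpowers_of_isUnit h3 x)
  · exact Subgroup.zpowers_le.mpr hgen₃ (lowerLeftHom.mem_zpowers_of_isUnit h3 x)

end Matrix.SpecialLinearGroup

theorem stmt4_general (d : ℕ) (hd3 : ¬ (3 ∣ d)) :
    Function.Surjective
      (fun γ : lubotzkyGroup =>
        Matrix.SpecialLinearGroup.map (Int.castRingHom (ZMod d))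
          (γ : Matrix.SpecialLinearGroup (Fin 2) ℤ)) := by
  have : NeZero d := ⟨by rintro rfl; exact hd3 (dvd_zero 3)⟩
  have h3 : IsUnit (3 : ZMod d) := by
    simpa using (ZMod.isUnit_iff_coprime 3 d).mpr (Nat.prime_three.coprime_iff_not_dvd.mpr hd3)
  intro g
  have hg : g ∈ Matrix.SpecialLinearGroup.elementarySubgroup (ZMod d) := by
    rw [Matrix.SpecialLinearGroup.elementarySubgroup_eq_top fun _ _ ↦ ZMod.exists_isUnit_add_mul_of_isCoprime]
    trivial
  obtain ⟨γ, hγ, rfl⟩ :=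
    Matrix.SpecialLinearGroup.elementarySubgroup_le_map_lubotzkyGroup h3 hg
  exact ⟨⟨γ, hγ⟩, rfl⟩

theorem stmt4 (d : ℕ) (hd : 0 < d) (hsf : Squarefree d) (hd3 : ¬ (3 ∣ d)) :
    Function.Surjective
      (fun γ : lubotzkyGroup =>
        Matrix.SpecialLinearGroup.map (Int.castRingHom (ZMod d))
          (γ : Matrix.SpecialLinearGroup (Fin 2) ℤ)) :=
  stmt4_general d hd3
end

section
/- Let four circles in the Euclidean plane ℝ² have centers z₁, z₂, z₃, z₄ and radii r₁, r₂, r₃, r₄ > 0, and suppose they are pairwise externally tangent: for all i ≠ j, the distance between z_i and z_j equals r_i + r_j. Then the curvatures c_i = 1/r_i satisfy 2(c₁² + c₂² + c₃² + c₄²) = (c₁ + c₂ + c₃ + c₄)². -/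
/-!
Put `vᵢ = zᵢ - z₀` for `i = 1, 2, 3`. Three vectors in the plane are linearly dependent, so their
Gram determinant vanishes. By the law of cosines the Gram entries are determined by the six
distances `|zᵢ - zⱼ| = rᵢ + rⱼ`, and expanding the determinant gives
`det (⟪vᵢ, vⱼ⟫) = 4 (r₀ r₁ r₂ r₃)² ((∑ cᵢ)² - 2 ∑ cᵢ²)` with `cᵢ = 1 / rᵢ`.
-/

open Matrix Module
open scoped RealInnerProductSpace

theorem Matrix.det_gram_eq_zero_of_finrank_lt {𝕜 E ι : Type*} [RCLike 𝕜] [NormedAddCommGroup E]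
    [InnerProductSpace 𝕜 E] [FiniteDimensional 𝕜 E] [Fintype ι] [DecidableEq ι] (v : ι → E)
    (h : finrank 𝕜 E < Fintype.card ι) : (gram 𝕜 v).det = 0 := by
  by_contra hdet
  exact h.not_ge (linearIndependent_of_det_gram_ne_zero hdet).fintype_card_le_finrank

theorem real_inner_sub_sub_eq_dist_sq {E : Type*} [NormedAddCommGroup E] [InnerProductSpace ℝ E]
    (a b c : E) : ⟪a - c, b - c⟫ = (dist a c ^ 2 + dist b c ^ 2 - dist a b ^ 2) / 2 := by
  have h := norm_sub_sq_real (a - c) (b - c)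
  rw [sub_sub_sub_cancel_right] at h
  rw [dist_eq_norm, dist_eq_norm, dist_eq_norm, h]
  ring

theorem det_gram_sub_eq_of_dist_eq_add {E : Type*} [NormedAddCommGroup E]
    [InnerProductSpace ℝ E] (z : Fin 4 → E) (r : Fin 4 → ℝ) (hr : ∀ i, r i ≠ 0)
    (htan : ∀ i j, i ≠ j → dist (z i) (z j) = r i + r j) :
    (gram ℝ fun i : Fin 3 ↦ z i.succ - z 0).det =
      4 * (∏ i, r i) ^ 2 * ((∑ i, (r i)⁻¹) ^ 2 - 2 * ∑ i, ((r i)⁻¹) ^ 2) := by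
  simp only [det_fin_three, gram, of_apply, real_inner_sub_sub_eq_dist_sq, dist_self,
    Fin.reduceSucc, Fin.sum_univ_four, Fin.prod_univ_four]
  simp (disch := decide) only [htan]
  field_simp [hr]
  ring

theorem stmt15 (z : Fin 4 → EuclideanSpace ℝ (Fin 2)) (r : Fin 4 → ℝ)
    (hr : ∀ i, 0 < r i)
    (htan : ∀ i j : Fin 4, i ≠ j → dist (z i) (z j) = r i + r j) :
    2 * (∑ i, ((r i)⁻¹) ^ 2) = (∑ i, (r i)⁻¹) ^ 2 := by
  have hr₀ (i : Fin 4) : r i ≠ 0 := (hr i).ne'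
  have hplanar : (gram ℝ fun i : Fin 3 ↦ z i.succ - z 0).det = 0 :=
    det_gram_eq_zero_of_finrank_lt _ (by simp)
  rw [det_gram_sub_eq_of_dist_eq_add z r hr₀ htan] at hplanar
  have hprod : 4 * (∏ i, r i) ^ 2 ≠ 0 :=
    mul_ne_zero four_ne_zero (pow_ne_zero 2 (Finset.prod_ne_zero_iff.mpr fun i _ ↦ hr₀ i))
  linarith [(mul_eq_zero.mp hplanar).resolve_left hprod]
end
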